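/- arXiv:2603.04096 — 11 statements merged into one kernel-verified Lean document; each statement's English description precedes it below -/
import Mathlib

section
/- Let p be an odd prime and A, B, C, D ∈ 𝔽_p. Define f₁(x) = x⁴ - A·x³ - (D+4)·x² + (4A + BC)·x + (4D + B² + C²), f₂(y) = y⁴ - B·y³ - (D+4)·y² + (4B + AC)·y + (4D + A² + C²), and f₃(z) = z⁴ - C·z³ - (D+4)·z² + (4C + AB)·z + (4D + A² + B²). Then the discriminants of f₁, f₂, and f₃ (as polynomials in one variable) are all equal. -/
/-- The discriminant of the monic quartic `X⁴ + b·X³ + c·X² + d·X + e`,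
given by the usual polynomial discriminant formula in its coefficients. -/
def quarticDisc {R : Type*} [CommRing R] (b c d e : R) : R :=
  256 * e ^ 3 - 192 * b * d * e ^ 2 - 128 * c ^ 2 * e ^ 2 + 144 * c * d ^ 2 * e
    - 27 * d ^ 4 + 144 * b ^ 2 * c * e ^ 2 - 6 * b ^ 2 * d ^ 2 * e
    - 80 * b * c ^ 2 * d * e + 18 * b * c * d ^ 3 + 16 * c ^ 4 * e
    - 4 * c ^ 3 * d ^ 2 - 27 * b ^ 4 * e ^ 2 + 18 * b ^ 3 * c * d * e
    - 4 * b ^ 3 * d ^ 3 - 4 * b ^ 2 * c ^ 3 * e + b ^ 2 * c ^ 2 * d ^ 2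

/-- For `f₁(x) = x⁴ - A·x³ - (D+4)·x² + (4A + BC)·x + (4D + B² + C²)`,
`f₂(y) = y⁴ - B·y³ - (D+4)·y² + (4B + AC)·y + (4D + A² + C²)` and
`f₃(z) = z⁴ - C·z³ - (D+4)·z² + (4C + AB)·z + (4D + A² + B²)` over `𝔽_p`
(`p` an odd prime), the discriminants of `f₁`, `f₂`, `f₃` all agree. -/
theorem stmt_0 (p : ℕ) (hp : p.Prime) (hodd : p ≠ 2) (A B C D : ZMod p) :
    quarticDisc (-A) (-(D + 4)) (4 * A + B * C) (4 * D + B ^ 2 + C ^ 2)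
      = quarticDisc (-B) (-(D + 4)) (4 * B + A * C) (4 * D + A ^ 2 + C ^ 2) ∧
    quarticDisc (-B) (-(D + 4)) (4 * B + A * C) (4 * D + A ^ 2 + C ^ 2)
      = quarticDisc (-C) (-(D + 4)) (4 * C + A * B) (4 * D + A ^ 2 + B ^ 2) := by
  unfold quarticDisc; constructor <;> ring
end

section
/- Let F be a field and A, B, C, D ∈ F. There are at most 4 points (x, y, z) on the surface x² + y² + z² = xyz + Ax + By + Cz + D with x² ≠ 4 that are fixed by both V₂ and V₃. -/
open Polynomial

/-- On the surface `x² + y² + z² = xyz + Ax + By + Cz + D` over a field,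
there are at most 4 points with `x² ≠ 4` fixed by both Vieta involutions
`V₂ : (x,y,z) ↦ (x, B + xz - y, z)` and `V₃ : (x,y,z) ↦ (x, y, C + xy - z)`. -/
theorem stmt_2 {F : Type*} [Field F] (A B C D : F) :
    let S : Set (F × F × F) := {P | P.1 ^ 2 + P.2.1 ^ 2 + P.2.2 ^ 2
        = P.1 * P.2.1 * P.2.2 + A * P.1 + B * P.2.1 + C * P.2.2 + D ∧
      P.1 ^ 2 ≠ 4 ∧
      (P.1, B + P.1 * P.2.2 - P.2.1, P.2.2) = P ∧
      (P.1, P.2.1, C + P.1 * P.2.1 - P.2.2) = P}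
    S.Finite ∧ S.ncard ≤ 4 := by
  intro S
  classical
  set q : F[X] := X ^ 4 - Polynomial.C A * X ^ 3 - Polynomial.C (D + 4) * X ^ 2
      + Polynomial.C (4 * A + B * C) * X + Polynomial.C (4 * D + B ^ 2 + C ^ 2) with hq
  have hmon : q.Monic := by unfold q; monicity!
  have hq0 : q ≠ 0 := hmon.ne_zero
  have hdeg : q.natDegree ≤ 4 := by unfold q; compute_degree
  -- basic facts about points of S
  have key : ∀ P ∈ S, (4 - P.1 ^ 2) * P.2.1 = 2 * B + C * P.1 ∧
      (4 - P.1 ^ 2) * P.2.2 = 2 * C + B * P.1 ∧ (4 - P.1 ^ 2) ≠ 0 ∧ q.IsRoot P.1 := by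
    rintro ⟨x, y, z⟩ ⟨heq, hx4, h2, h3⟩
    simp only [Prod.mk.injEq] at h2 h3
    have e1 : B + x * z - y = y := h2.2.1
    have e2 : C + x * y - z = z := h3.2.2
    have hy : (4 - x ^ 2) * y = 2 * B + C * x := by linear_combination -2 * e1 - x * e2
    have hz : (4 - x ^ 2) * z = 2 * C + B * x := by linear_combination -2 * e2 - x * e1
    have h4 : (4 : F) - x ^ 2 ≠ 0 := by
      intro h
      exact hx4 (by linear_combination -h)
    refine ⟨hy, hz, h4, ?_⟩
    have hmul : (4 - x ^ 2) * (x ^ 4 - A * x ^ 3 - (D + 4) * x ^ 2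
        + (4 * A + B * C) * x + (4 * D + B ^ 2 + C ^ 2)) = 0 := by
      linear_combination (-(4 - x ^ 2) ^ 2) * heq
        + ((4 - x ^ 2) * y + (2 * B + C * x) - x * (4 - x ^ 2) * z - B * (4 - x ^ 2)) * hy
        + ((4 - x ^ 2) * z + (2 * C + B * x) - x * (2 * B + C * x) - C * (4 - x ^ 2)) * hz
    have := mul_eq_zero.mp hmul
    rcases this with h | h
    · exact absurd h h4
    · simp only [IsRoot, hq]
      simp [eval_pow, eval_mul, eval_add, eval_sub, eval_C, eval_X]
      linear_combination h
  -- S injects into the root set of q via the first coordinate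
  have hsub : ∀ P ∈ S, P.1 ∈ (q.roots.toFinset : Set F) := by
    intro P hP
    have h := (key P hP).2.2.2
    simp only [Multiset.mem_toFinset, Finset.coe_sort_coe, Set.mem_setOf_eq,
      Finset.mem_coe, mem_roots hq0]
    exact h
  have hinj : Set.InjOn Prod.fst S := by
    rintro ⟨x1, y1, z1⟩ h1 ⟨x2, y2, z2⟩ h2 hx
    simp only at hx
    subst hx
    obtain ⟨hy1, hz1, h41, -⟩ := key _ h1
    obtain ⟨hy2, hz2, -, -⟩ := key _ h2
    have : y1 = y2 := mul_left_cancel₀ h41 (hy1.trans hy2.symm)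
    have : z1 = z2 := mul_left_cancel₀ h41 (hz1.trans hz2.symm)
    simp_all
  have hcard : (q.roots.toFinset : Set F).ncard ≤ 4 := by
    rw [Set.ncard_coe_finset]
    calc q.roots.toFinset.card ≤ Multiset.card q.roots := q.roots.toFinset_card_le
      _ ≤ q.natDegree := q.card_roots' 
      _ ≤ 4 := hdeg
  have hfin : S.Finite :=
    Set.Finite.of_finite_image ((q.roots.toFinset.finite_toSet).subset
      (Set.image_subset_iff.mpr hsub)) hinj
  exact ⟨hfin, le_trans (Set.ncard_le_ncard_of_injOn Prod.fst hsub hinj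
    (q.roots.toFinset.finite_toSet)) hcard⟩
end

section
/- Let F be a field, A ∈ F, D ∈ F, and suppose the polynomial T² - AT - D has two distinct roots r₁, r₂ in F. Then (r₁, 0, 0) and (r₂, 0, 0) are solutions to X² + Y² + Z² = XYZ + AX + D; V₁ exchanges them; and both are fixed by V₂ and V₃. In particular {(r₁,0,0), (r₂,0,0)} is an orbit of size 2 under the group generated by V₁, V₂, V₃. -/
/-- If `T² - AT - D` has two distinct roots `r₁, r₂` in a field `F`, then
`(r₁,0,0)` and `(r₂,0,0)` lie on `X² + Y² + Z² = XYZ + AX + D`, the Vieta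
involution `V₁` exchanges them, both are fixed by `V₂` and `V₃`, and
`{(r₁,0,0), (r₂,0,0)}` is an orbit of size 2. -/
theorem stmt_4 {F : Type*} [Field F] (A D r₁ r₂ : F)
    (h₁ : r₁ ^ 2 - A * r₁ - D = 0) (h₂ : r₂ ^ 2 - A * r₂ - D = 0)
    (hne : r₁ ≠ r₂) :
    (r₁ ^ 2 + 0 ^ 2 + 0 ^ 2 = r₁ * 0 * 0 + A * r₁ + 0 * 0 + 0 * 0 + D) ∧
    (r₂ ^ 2 + 0 ^ 2 + 0 ^ 2 = r₂ * 0 * 0 + A * r₂ + 0 * 0 + 0 * 0 + D) ∧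
    -- V₁ exchanges the two points
    ((A + 0 * 0 - r₁ : F), (0 : F), (0 : F)) = (r₂, 0, 0) ∧
    ((A + 0 * 0 - r₂ : F), (0 : F), (0 : F)) = (r₁, 0, 0) ∧
    -- V₂ and V₃ fix both points
    ((r₁, 0 + r₁ * 0 - 0, 0) = ((r₁ : F), (0 : F), (0 : F))) ∧
    ((r₁, 0, 0 + r₁ * 0 - 0) = ((r₁ : F), (0 : F), (0 : F))) ∧
    ((r₂, 0 + r₂ * 0 - 0, 0) = ((r₂ : F), (0 : F), (0 : F))) ∧
    ((r₂, 0, 0 + r₂ * 0 - 0) = ((r₂ : F), (0 : F), (0 : F))) ∧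
    ({((r₁ : F), (0 : F), (0 : F)), ((r₂ : F), (0 : F), (0 : F))} : Set (F × F × F)).ncard = 2 := by
  have hs : r₁ + r₂ = A := by
    have h : (r₁ - r₂) * (r₁ + r₂ - A) = 0 := by linear_combination h₁ - h₂
    rcases mul_eq_zero.mp h with h' | h'
    · exact absurd (sub_eq_zero.mp h') hne
    · linear_combination h'
  refine ⟨by linear_combination h₁, by linear_combination h₂, ?_, ?_,
    by norm_num, by norm_num, by norm_num, by norm_num, ?_⟩
  · have : A + 0 * 0 - r₁ = r₂ := by linear_combination -hs
    rw [this]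
  · have : A + 0 * 0 - r₂ = r₁ := by linear_combination -hs
    rw [this]
  · rw [Set.ncard_pair]
    simp only [ne_eq, Prod.mk.injEq, not_and]
    intro h _; exact hne h
end

section
/- Let F be a field and k ∈ F. On the surface X² + Y² + Z² = XYZ - 2X + kY + kZ - 1, the set {(-1, 0, 0), (-1, k, 0), (-1, 0, k)} is a complete orbit under the group generated by the three Vieta involutions: (-1,0,0) is fixed by V₁, V₂ maps (-1,0,0) to (-1,k,0), V₃ maps (-1,0,0) to (-1,0,k), (-1,k,0) is fixed by V₁ and V₃, and (-1,0,k) is fixed by V₁ and V₂. -/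
/-- On the surface `X² + Y² + Z² = XYZ - 2X + kY + kZ - 1`, the set
`{(-1,0,0), (-1,k,0), (-1,0,k)}` is a complete orbit under the group
generated by the Vieta involutions `V₁(x,y,z) = (-2 + yz - x, y, z)`,
`V₂(x,y,z) = (x, k + xz - y, z)`, `V₃(x,y,z) = (x, y, k + xy - z)`. -/
theorem stmt_5 {F : Type*} [Field F] (k : F) :
    -- the three points lie on the surface
    ((-1 : F) ^ 2 + (0 : F) ^ 2 + (0 : F) ^ 2
      = (-1) * 0 * 0 + (-2) * (-1) + k * 0 + k * 0 + (-1)) ∧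
    ((-1 : F) ^ 2 + k ^ 2 + (0 : F) ^ 2
      = (-1) * k * 0 + (-2) * (-1) + k * k + k * 0 + (-1)) ∧
    ((-1 : F) ^ 2 + (0 : F) ^ 2 + k ^ 2
      = (-1) * 0 * k + (-2) * (-1) + k * 0 + k * k + (-1)) ∧
    -- (-1,0,0) is fixed by V₁
    (((-2) + 0 * 0 - (-1) : F), (0 : F), (0 : F)) = ((-1 : F), (0 : F), (0 : F)) ∧
    -- V₂ maps (-1,0,0) to (-1,k,0)
    ((-1 : F), (k + (-1) * 0 - 0 : F), (0 : F)) = ((-1 : F), k, (0 : F)) ∧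
    -- V₃ maps (-1,0,0) to (-1,0,k)
    ((-1 : F), (0 : F), (k + (-1) * 0 - 0 : F)) = ((-1 : F), (0 : F), k) ∧
    -- (-1,k,0) is fixed by V₁ and V₃
    (((-2) + k * 0 - (-1) : F), k, (0 : F)) = ((-1 : F), k, (0 : F)) ∧
    ((-1 : F), k, (k + (-1) * k - 0 : F)) = ((-1 : F), k, (0 : F)) ∧
    -- (-1,0,k) is fixed by V₁ and V₂
    (((-2) + 0 * k - (-1) : F), (0 : F), k) = ((-1 : F), (0 : F), k) ∧
    ((-1 : F), (k + (-1) * k - 0 : F), k) = ((-1 : F), (0 : F), k) := by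
  refine ⟨by ring, by ring, by ring, by norm_num, by norm_num, by norm_num, by norm_num [Prod.ext_iff], by simp [Prod.ext_iff], by norm_num, by simp [Prod.ext_iff]⟩
end

section
/- Let V and W be two involutions acting on a finite set S such that the orbit of a point under ⟨V, W⟩ has the structure of a path graph v₁, …, vₙ (where consecutive vertices are joined by alternately applying V and W, v₁ is fixed by one of the involutions and vₙ by the other). Then the composition V∘W acts transitively on {v₁, …, vₙ}, i.e., the orbit of v₁ under the cyclic group generated by V∘W is all of {v₁,…,vₙ}. -/
/-- If the orbit of a point under two involutions `V`, `W` is a path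
`v 0, v 1, …, v (n-1)` (consecutive vertices joined by alternately applying
`W` and `V`, with `v 0` fixed by `V` and the far endpoint fixed by the other
applicable involution), then the composition `V ∘ W` acts transitively on the
path: every `v j` is an iterate of `V ∘ W` applied to `v 0`. -/
theorem stmt_8 {S : Type*} (V W : S → S)
    (hV : Function.Involutive V) (hW : Function.Involutive W)
    (n : ℕ) (hn : 1 ≤ n) (v : ℕ → S)
    (hinj : ∀ i j, i < n → j < n → v i = v j → i = j)
    (hstart : V (v 0) = v 0)
    (hstep : ∀ i, i + 1 < n → (if Even i then W (v i) else V (v i)) = v (i + 1))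
    (hend : (if Even n then V (v (n - 1)) else W (v (n - 1))) = v (n - 1)) :
    ∀ j, j < n → ∃ k : ℕ, (fun x => V (W x))^[k] (v 0) = v j := by
  have key : ∀ k, k ≤ n - 1 →
      (fun x => V (W x))^[k] (v 0) = v (if 2 * k < n then 2 * k else 2 * n - 1 - 2 * k) := by
    intro k
    induction k with
    | zero =>
      intro _
      have h0 : 2 * 0 < n := by omega
      rw [Function.iterate_zero_apply, if_pos h0]
    | succ k ih =>
      intro hk1
      have hk : k ≤ n - 1 := by omega
      rw [Function.iterate_succ_apply', ih hk]
      by_cases h1 : 2 * k < n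
      · by_cases h2 : 2 * (k + 1) < n
        · -- interior step
          rw [if_pos h1, if_pos h2]
          have hw := hstep (2 * k) (by omega)
          rw [if_pos (even_two_mul k)] at hw
          have hv := hstep (2 * k + 1) (by omega)
          have hodd : ¬ Even (2 * k + 1) := by rw [Nat.even_iff]; omega
          rw [if_neg hodd] at hv
          rw [hw, hv]
          congr 1
        · by_cases hne : Even n
          · -- n = 2k + 2, turn at the far end fixed by V
            have hn2 : n = 2 * k + 2 := by
              obtain ⟨m, hm⟩ := hne; omega
            rw [if_pos h1, if_neg h2]
            have hw := hstep (2 * k) (by omega)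
            rw [if_pos (even_two_mul k)] at hw
            rw [hw]
            rw [if_pos hne] at hend
            have he1 : n - 1 = 2 * k + 1 := by omega
            rw [he1] at hend
            rw [hend]
            congr 1; omega
          · -- n = 2k + 1, turn at the far end fixed by W
            have hn2 : n = 2 * k + 1 := by
              rw [Nat.even_iff] at hne; omega
            have hkpos : 1 ≤ k := by omega
            rw [if_pos h1, if_neg h2]
            rw [if_neg hne] at hend
            have he1 : n - 1 = 2 * k := by omega
            rw [he1] at hend
            rw [hend]
            have hv := hstep (2 * k - 1) (by omega)
            have hodd : ¬ Even (2 * k - 1) := by rw [Nat.even_iff]; omega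
            rw [if_neg hodd] at hv
            have he2 : 2 * k - 1 + 1 = 2 * k := by omega
            rw [he2] at hv
            rw [← hv, hV]
            congr 1; omega
      · -- descending along odd indices
        set j := 2 * n - 1 - 2 * k with hj
        have hj3 : 3 ≤ j := by omega
        have hjn : j < n := by omega
        rw [if_neg h1, if_neg (by omega : ¬ 2 * (k + 1) < n)]
        have hw := hstep (j - 1) (by omega)
        have hev : Even (j - 1) := by rw [Nat.even_iff]; omega
        rw [if_pos hev] at hw
        have he1 : j - 1 + 1 = j := by omega
        rw [he1] at hw
        have hv := hstep (j - 2) (by omega)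
        have hodd : ¬ Even (j - 2) := by rw [Nat.even_iff]; omega
        rw [if_neg hodd] at hv
        have he2 : j - 2 + 1 = j - 1 := by omega
        rw [he2] at hv
        rw [← hw, hW, ← hv, hV]
        congr 1
  intro j hj
  by_cases hje : Even j
  · obtain ⟨m, hm⟩ := hje
    refine ⟨m, ?_⟩
    rw [key m (by omega)]
    rw [if_pos (by omega : 2 * m < n)]
    congr 1; omega
  · rw [Nat.even_iff] at hje
    refine ⟨n - 1 - j / 2, ?_⟩
    rw [key _ (by omega)]
    rw [if_neg (by omega : ¬ 2 * (n - 1 - j / 2) < n)]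
    congr 1; omega
end

section
/- Let F be a field of characteristic ≠ 2, A, B, C, D ∈ F, and let (x, y, z) satisfy x² + y² + z² = xyz + Ax + By + Cz + D with x² ≠ 4. Let χ satisfy χ² - xχ + 1 = 0 (in F or a quadratic extension), and define ξ = (χ⁻¹ - χ)⁻¹(χ⁻¹y - z + (χ⁻¹ - χ)⁻¹(B + Cχ⁻¹)) and η = (χ⁻¹ - χ)⁻¹(-χy + z + (χ⁻¹ - χ)⁻¹(B + Cχ)). Then ξ·η = (x² - 4)⁻¹(x² - Ax - D + (x² - 4)⁻¹(B² + C² + BCx)). -/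
/-- In the diagonalizing coordinates `ξ, η` for the Dehn twist on the conic
section `X = x` of the surface `x² + y² + z² = xyz + Ax + By + Cz + D`
(`x = χ + χ⁻¹`, `x² ≠ 4`), the product `ξ·η` equals
`κ₁(x) = (x²-4)⁻¹(x² - Ax - D + (x²-4)⁻¹(B² + C² + BCx))`. -/
theorem stmt_10 {K : Type*} [Field K] (h2 : (2 : K) ≠ 0) (A B C D x y z χ : K)
    (hsurf : x ^ 2 + y ^ 2 + z ^ 2 = x * y * z + A * x + B * y + C * z + D)
    (hx : x ^ 2 ≠ 4)
    (hχ : χ ^ 2 - x * χ + 1 = 0) :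
    ((χ⁻¹ - χ)⁻¹ * (χ⁻¹ * y - z + (χ⁻¹ - χ)⁻¹ * (B + C * χ⁻¹))) *
      ((χ⁻¹ - χ)⁻¹ * (-(χ * y) + z + (χ⁻¹ - χ)⁻¹ * (B + C * χ))) =
    (x ^ 2 - 4)⁻¹ * (x ^ 2 - A * x - D + (x ^ 2 - 4)⁻¹ * (B ^ 2 + C ^ 2 + B * C * x)) := by
  have hχ0 : χ ≠ 0 := by
    intro h; rw [h] at hχ; simp at hχ
  have hinv : χ⁻¹ = x - χ := by
    field_simp
    linear_combination hχ
  have hsq : (x - χ - χ) ^ 2 = x ^ 2 - 4 := by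
    linear_combination 4 * hχ
  have hd : x - χ - χ ≠ 0 := by
    intro h
    exact hx (by linear_combination -hsq + (x - χ - χ) * h)
  have hv : (x ^ 2 - 4)⁻¹ = ((x - χ - χ)⁻¹) ^ 2 := by
    rw [← hsq, ← inv_pow]
  have hu : (x - χ - χ) * (x - χ - χ)⁻¹ = 1 := mul_inv_cancel₀ hd
  rw [hinv, hv]
  set u := (x - χ - χ)⁻¹
  linear_combination u ^ 2 * (B * y + C * z) * hu - u ^ 2 * hsurf +
    (u ^ 2 * y ^ 2 - u ^ 4 * C ^ 2) * hχ
end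

section
/- Let p be an odd prime and A, B, C, D ∈ 𝔽_p, and let x ∈ 𝔽_p with x² ≠ 4 be such that x = χ + χ⁻¹ where χ has maximal order (p-1 if χ ∈ 𝔽_p×, p+1 if χ ∈ 𝔽_{p²} with χ^{p+1}=1), and κ₁(x) ≠ 0. Then the conic C₁(x) = {(y,z) : x² + y² + z² = xyz + Ax + By + Cz + D} forms a single orbit under the group generated by the involutions V₂ and V₃ if and only if f₁(x) = (x²-4)²κ₁(x) is a quadratic nonresidue mod p. -/
open Polynomial in
lemma aux_mem_range {p : ℕ} [Fact p.Prime] (a : GaloisField p 2) (ha : a ^ p = a) :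
    ∃ b : ZMod p, algebraMap (ZMod p) (GaloisField p 2) b = a := by
  classical
  have hp1 : 1 < p := (Fact.out : p.Prime).one_lt
  have hinj : Function.Injective (algebraMap (ZMod p) (GaloisField p 2)) :=
    (algebraMap (ZMod p) (GaloisField p 2)).injective
  by_contra hcon
  push_neg at hcon
  set P : (GaloisField p 2)[X] := X ^ p - X with hP
  have hdeg : P.natDegree = p := FiniteField.X_pow_card_sub_X_natDegree_eq (GaloisField p 2) hp1
  have hP0 : P ≠ 0 := fun h => by simp [h] at hdeg; omega
  set T : Finset (GaloisField p 2) :=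
    Finset.univ.image (fun t : ZMod p => algebraMap (ZMod p) (GaloisField p 2) t) with hT
  have hTcard : T.card = p := by
    rw [hT, Finset.card_image_of_injective _ hinj, Finset.card_univ, ZMod.card]
  have hroot : ∀ t : ZMod p, algebraMap (ZMod p) (GaloisField p 2) t ∈ P.roots := by
    intro t
    rw [Polynomial.mem_roots hP0]
    simp only [hP, IsRoot, eval_sub, eval_pow, eval_X]
    rw [← map_pow, ZMod.pow_card, sub_self]
  have hTsub : T ⊆ P.roots.toFinset := by
    intro u hu
    rw [hT, Finset.mem_image] at hu
    obtain ⟨t, _, rfl⟩ := hu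
    exact Multiset.mem_toFinset.mpr (hroot t)
  have haroot : a ∈ P.roots := by
    rw [Polynomial.mem_roots hP0]
    simp only [hP, IsRoot, eval_sub, eval_pow, eval_X]
    rw [ha, sub_self]
  have hanotT : a ∉ T := by
    intro h
    rw [hT, Finset.mem_image] at h
    obtain ⟨t, _, ht⟩ := h
    exact hcon t ht
  have hsub2 : insert a T ⊆ P.roots.toFinset := by
    intro u hu
    rcases Finset.mem_insert.mp hu with rfl | h
    · exact Multiset.mem_toFinset.mpr haroot
    · exact hTsub h
  have h1 : (insert a T).card = p + 1 := by rw [Finset.card_insert_of_notMem hanotT, hTcard]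
  have h2 : P.roots.toFinset.card ≤ p := le_trans (Multiset.toFinset_card_le _)
    (le_trans (Polynomial.card_roots' P) (le_of_eq hdeg))
  have := Finset.card_le_card hsub2
  omega


namespace S12

variable {p : ℕ} [Fact p.Prime]

noncomputable def em (p : ℕ) [Fact p.Prime] : ZMod p →+* GaloisField p 2 :=
  algebraMap (ZMod p) (GaloisField p 2)

noncomputable def UU (B C : ZMod p) (χ μ : GaloisField p 2) (q : ZMod p × ZMod p) :
    GaloisField p 2 :=
  (χ - μ) * (em p q.1 - χ * em p q.2) - (em p B * χ + em p C)

noncomputable def VV (B C : ZMod p) (χ μ : GaloisField p 2) (q : ZMod p × ZMod p) :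
    GaloisField p 2 :=
  (χ - μ) * (em p q.1 - μ * em p q.2) + (em p B * μ + em p C)

lemma conic_id (A B C D x : ZMod p) (χ μ : GaloisField p 2) (hμ : χ * μ = 1)
    (hx : em p x = χ + μ) (q : ZMod p × ZMod p) :
    UU B C χ μ q * VV B C χ μ q
      + em p (x ^ 4 - A * x ^ 3 - (D + 4) * x ^ 2 + (4 * A + B * C) * x
          + (4 * D + B ^ 2 + C ^ 2))
    = (χ - μ) ^ 2 * (em p (x ^ 2 + q.1 ^ 2 + q.2 ^ 2)
        - em p (x * q.1 * q.2 + A * x + B * q.1 + C * q.2 + D)) := by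
  simp only [UU, VV, map_add, map_sub, map_mul, map_pow, map_ofNat]
  rw [hx]
  linear_combination (-(4:GaloisField p 2) * em p D - (em p B)^2 - 4*μ*(em p A) + 4*μ^2
    + μ^2*(em p q.2)^2 - 4*χ*(em p A) + 8*χ*μ - 2*χ*μ*(em p q.2)^2 + 4*χ^2
    + χ^2*(em p q.2)^2) * hμ

lemma moveU2 (B C x : ZMod p) (χ μ : GaloisField p 2) (hx : em p x = χ + μ)
    (q : ZMod p × ZMod p) :
    UU B C χ μ (B + x * q.2 - q.1, q.2) = - VV B C χ μ q := by
  simp only [UU, VV, map_add, map_sub, map_mul]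
  rw [hx]; ring

lemma moveV2 (B C x : ZMod p) (χ μ : GaloisField p 2) (hx : em p x = χ + μ)
    (q : ZMod p × ZMod p) :
    VV B C χ μ (B + x * q.2 - q.1, q.2) = - UU B C χ μ q := by
  simp only [UU, VV, map_add, map_sub, map_mul]
  rw [hx]; ring

lemma moveU3 (B C x : ZMod p) (χ μ : GaloisField p 2) (hμ : χ * μ = 1)
    (hx : em p x = χ + μ) (q : ZMod p × ZMod p) :
    UU B C χ μ (q.1, C + x * q.1 - q.2) = - χ ^ 2 * VV B C χ μ q := by
  simp only [UU, VV, map_add, map_sub, map_mul]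
  rw [hx]
  linear_combination (em p C + μ * em p q.1 - χ * em p q.1 + χ * em p B
    + χ * μ * em p q.2 - χ^2 * em p q.2) * hμ

lemma moveV3 (B C x : ZMod p) (χ μ : GaloisField p 2) (hμ : χ * μ = 1)
    (hx : em p x = χ + μ) (q : ZMod p × ZMod p) :
    VV B C χ μ (q.1, C + x * q.1 - q.2) = - μ ^ 2 * UU B C χ μ q := by
  simp only [UU, VV, map_add, map_sub, map_mul]
  rw [hx]
  linear_combination (-(em p C) + μ * em p q.1 - μ * em p B + μ^2 * em p q.2
    - χ * em p q.1 - χ * μ * em p q.2) * hμ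

lemma coord_inj (B C : ZMod p) (χ μ : GaloisField p 2) (hδ : χ - μ ≠ 0)
    (q r : ZMod p × ZMod p) (h1 : UU B C χ μ q = UU B C χ μ r)
    (h2 : VV B C χ μ q = VV B C χ μ r) : q = r := by
  have hinj : Function.Injective (em p) := (em p).injective
  have e1 : (χ - μ) ^ 2 * (em p q.2 - em p r.2) = 0 := by
    simp only [UU, VV] at h1 h2
    linear_combination h2 - h1
  have hz : q.2 = r.2 := by
    rcases mul_eq_zero.mp e1 with h | h
    · exact absurd h (pow_ne_zero 2 hδ)
    · exact hinj (sub_eq_zero.mp h)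
  have hz' : em p q.2 = em p r.2 := congrArg (em p) hz
  have e2 : (χ - μ) * (em p q.1 - em p r.1) = 0 := by
    simp only [UU] at h1
    linear_combination h1 + (χ - μ) * χ * hz'
  have hy : q.1 = r.1 := by
    rcases mul_eq_zero.mp e2 with h | h
    · exact absurd h hδ
    · exact hinj (sub_eq_zero.mp h)
  exact Prod.ext hy hz

lemma frob_pow (B C : ZMod p) (χ μ : GaloisField p 2) (hχp : χ ^ p = μ) (hμp : μ ^ p = χ)
    (q : ZMod p × ZMod p) :
    (UU B C χ μ q) ^ p = - VV B C χ μ q := by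
  have hfr : ∀ w : GaloisField p 2, frobenius (GaloisField p 2) p w = w ^ p :=
    fun w => rfl
  have hem : ∀ a : ZMod p, (em p a) ^ p = em p a := by
    intro a; rw [← map_pow, ZMod.pow_card]
  calc (UU B C χ μ q) ^ p
      = frobenius (GaloisField p 2) p (UU B C χ μ q) := rfl
    _ = - VV B C χ μ q := by
        simp only [UU, VV, map_sub, map_mul, map_add]
        simp only [hfr, hem, hχp, hμp]
        ring

end S12


/-- Let `p` be an odd prime, `A,B,C,D,x ∈ 𝔽_p` with `x² ≠ 4`, and suppose
`x = χ + χ⁻¹` where `χ` is of maximal order: either `χ ∈ 𝔽_p` of order `p-1`,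
or `χ ∈ 𝔽_{p²}` with `χ^{p+1} = 1` of order `p+1`; assume `κ₁(x) ≠ 0`. Then
the group generated by the Vieta involutions `V₂` and `V₃` acts transitively
on the conic `C₁(x) = {(y,z) : x² + y² + z² = xyz + Ax + By + Cz + D}` if and
only if `f₁(x) = (x²-4)²κ₁(x)` is a quadratic nonresidue mod `p`. -/
theorem stmt_12 (p : ℕ) [Fact p.Prime] (hodd : p ≠ 2) (A B C D x : ZMod p)
    (hx : x ^ 2 ≠ 4)
    (χ : GaloisField p 2)
    (hχ : algebraMap (ZMod p) (GaloisField p 2) x = χ + χ⁻¹)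
    (hmax : (χ ∈ Set.range (algebraMap (ZMod p) (GaloisField p 2)) ∧
              orderOf χ = p - 1) ∨
            (χ ^ (p + 1) = 1 ∧ orderOf χ = p + 1))
    (hκ : (x ^ 2 - 4)⁻¹ * (x ^ 2 - A * x - D
            + (x ^ 2 - 4)⁻¹ * (B ^ 2 + C ^ 2 + B * C * x)) ≠ 0) :
    ((∀ P ∈ {q : ZMod p × ZMod p | x ^ 2 + q.1 ^ 2 + q.2 ^ 2
          = x * q.1 * q.2 + A * x + B * q.1 + C * q.2 + D},
      ∀ Q ∈ {q : ZMod p × ZMod p | x ^ 2 + q.1 ^ 2 + q.2 ^ 2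
          = x * q.1 * q.2 + A * x + B * q.1 + C * q.2 + D},
      ∃ w : List Bool,
        w.foldl (fun q b => if b then (B + x * q.2 - q.1, q.2)
                            else (q.1, C + x * q.1 - q.2)) P = Q)
      ↔ ¬ IsSquare (x ^ 4 - A * x ^ 3 - (D + 4) * x ^ 2
            + (4 * A + B * C) * x + (4 * D + B ^ 2 + C ^ 2))) := by
  classical
  obtain ⟨r, hr⟩ := (Fact.out : p.Prime).odd_of_ne_two hodd
  have hp1 : 1 < p := (Fact.out : p.Prime).one_lt
  have hr1 : 1 ≤ r := by omega
  have hιinj : Function.Injective (S12.em p) := (S12.em p).injective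
  have hχ0 : χ ≠ 0 := by
    intro h0
    rcases hmax with ⟨_, h⟩ | ⟨h, _⟩
    · have h1 : χ ^ (p - 1) = 1 := by rw [← h]; exact pow_orderOf_eq_one χ
      rw [h0, zero_pow (by omega)] at h1
      exact zero_ne_one h1
    · rw [h0, zero_pow (by omega)] at h
      exact zero_ne_one h
  set μ := χ⁻¹ with hμdef
  have hμ : χ * μ = 1 := mul_inv_cancel₀ hχ0
  have hμ0 : μ ≠ 0 := inv_ne_zero hχ0
  have hxe : S12.em p x = χ + μ := hχ
  have hδsq : S12.em p (x ^ 2 - 4) = (χ - μ) ^ 2 := by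
    simp only [map_sub, map_pow, map_ofNat]
    rw [hxe]
    linear_combination (4 : GaloisField p 2) * hμ
  have hx40 : x ^ 2 - 4 ≠ 0 := sub_ne_zero.mpr hx
  have hδ0 : χ - μ ≠ 0 := by
    intro h
    apply hx40
    apply hιinj
    rw [map_zero, hδsq, h]
    ring
  set f := x ^ 4 - A * x ^ 3 - (D + 4) * x ^ 2 + (4 * A + B * C) * x
      + (4 * D + B ^ 2 + C ^ 2) with hfdef
  have hf0 : f ≠ 0 := by
    have h2 : x ^ 2 - A * x - D + (x ^ 2 - 4)⁻¹ * (B ^ 2 + C ^ 2 + B * C * x) ≠ 0 :=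
      fun h => hκ (by rw [h, mul_zero])
    have hfe : f = (x ^ 2 - 4) *
        (x ^ 2 - A * x - D + (x ^ 2 - 4)⁻¹ * (B ^ 2 + C ^ 2 + B * C * x)) := by
      rw [hfdef]
      field_simp
      ring
    rw [hfe]
    exact mul_ne_zero hx40 h2
  have hιf0 : S12.em p f ≠ 0 := by
    intro h
    exact hf0 (hιinj (by rw [h, map_zero]))
  set n := orderOf χ with hn
  have hχn : χ ^ n = 1 := pow_orderOf_eq_one χ
  have hnval : n = p - 1 ∨ n = p + 1 := by
    rcases hmax with ⟨_, h⟩ | ⟨_, h⟩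
    · exact Or.inl h
    · exact Or.inr h
  have hnpos : 0 < n := by rcases hnval with h | h <;> omega
  have hneven : Even n := by
    rcases hnval with h | h
    · exact ⟨r, by omega⟩
    · exact ⟨r + 1, by omega⟩
  have parity : ∀ a b : ℕ, χ ^ a = χ ^ b → (Even a ↔ Even b) := by
    have key : ∀ a b : ℕ, a ≤ b → χ ^ a = χ ^ b → (Even a ↔ Even b) := by
      intro a b hab he
      have h1 : χ ^ a * χ ^ (b - a) = χ ^ a * 1 := by
        rw [mul_one, ← pow_add, show a + (b - a) = b by omega]
        exact he.symm
      have h2 : χ ^ (b - a) = 1 := mul_left_cancel₀ (pow_ne_zero a hχ0) h1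
      have h3 : n ∣ b - a := orderOf_dvd_of_pow_eq_one h2
      obtain ⟨s, hs⟩ := hneven
      obtain ⟨m, hm⟩ := h3
      have h4 : Even (b - a) := ⟨s * m, by rw [hm, hs]; ring⟩
      exact ((Nat.even_sub hab).mp h4).symm
    intro a b he
    rcases le_total a b with h | h
    · exact key a b h he
    · exact (key b a h he.symm).symm
  set mv : ZMod p × ZMod p → Bool → ZMod p × ZMod p :=
    fun q b => if b then (B + x * q.2 - q.1, q.2) else (q.1, C + x * q.1 - q.2) with hmv
  set Cn : ZMod p × ZMod p → Prop :=
    fun q => x ^ 2 + q.1 ^ 2 + q.2 ^ 2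
        = x * q.1 * q.2 + A * x + B * q.1 + C * q.2 + D with hCn
  set Uc : ZMod p × ZMod p → GaloisField p 2 := S12.UU B C χ μ with hUcdef
  set Vc : ZMod p × ZMod p → GaloisField p 2 := S12.VV B C χ μ with hVcdef
  have hU2 : ∀ q, Uc (mv q true) = - Vc q := fun q => S12.moveU2 B C x χ μ hxe q
  have hV2 : ∀ q, Vc (mv q true) = - Uc q := fun q => S12.moveV2 B C x χ μ hxe q
  have hU3 : ∀ q, Uc (mv q false) = - χ ^ 2 * Vc q := fun q => S12.moveU3 B C x χ μ hμ hxe q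
  have hV3 : ∀ q, Vc (mv q false) = - μ ^ 2 * Uc q := fun q => S12.moveV3 B C x χ μ hμ hxe q
  have hconic : ∀ q, Cn q ↔ Uc q * Vc q = -(S12.em p f) := by
    intro q
    have hid := S12.conic_id A B C D x χ μ hμ hxe q
    constructor
    · intro h
      have h'' : x ^ 2 + q.1 ^ 2 + q.2 ^ 2
          = x * q.1 * q.2 + A * x + B * q.1 + C * q.2 + D := h
      have h' := congrArg (S12.em p) h''
      linear_combination hid + (χ - μ) ^ 2 * h'
    · intro h
      have h0 : (χ - μ) ^ 2 * (S12.em p (x ^ 2 + q.1 ^ 2 + q.2 ^ 2)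
          - S12.em p (x * q.1 * q.2 + A * x + B * q.1 + C * q.2 + D)) = 0 := by
        linear_combination h - hid
      have h1 := (mul_eq_zero.mp h0).resolve_left (pow_ne_zero 2 hδ0)
      show x ^ 2 + q.1 ^ 2 + q.2 ^ 2 = x * q.1 * q.2 + A * x + B * q.1 + C * q.2 + D
      exact hιinj (sub_eq_zero.mp h1)
  have hUV : ∀ q, Cn q → Uc q * Vc q = -(S12.em p f) := fun q h => (hconic q).mp h
  have hU0 : ∀ q, Cn q → Uc q ≠ 0 := fun q h =>
    left_ne_zero_of_mul (a := Uc q) (b := Vc q)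
      (by rw [hUV q h]; exact neg_ne_zero.mpr hιf0)
  have hV0 : ∀ q, Cn q → Vc q ≠ 0 := fun q h =>
    right_ne_zero_of_mul (a := Uc q) (b := Vc q)
      (by rw [hUV q h]; exact neg_ne_zero.mpr hιf0)
  have hmvC : ∀ q b, Cn q → Cn (mv q b) := by
    intro q b hq
    have hq' := hUV q hq
    cases b
    · refine (hconic _).mpr ?_
      rw [hU3 q, hV3 q]
      linear_combination (χ * μ + 1) * (Uc q * Vc q) * hμ + hq'
    · refine (hconic _).mpr ?_
      rw [hU2 q, hV2 q]
      linear_combination hq'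
  have hfoldC : ∀ w P, Cn P → Cn (List.foldl mv P w) := by
    intro w
    induction w with
    | nil => intro P h; rw [List.foldl_nil]; exact h
    | cons b w ih => intro P h; rw [List.foldl_cons]; exact ih _ (hmvC P b h)
  have hreach : ∀ w P, Cn P → ∃ j : ℕ,
      Uc (List.foldl mv P w) = χ ^ (2 * j) * Uc P ∨
      Uc (List.foldl mv P w) = χ ^ (2 * j) * (- Vc P) := by
    intro w
    induction w with
    | nil =>
      intro P h
      exact ⟨0, Or.inl (by rw [List.foldl_nil]; ring)⟩
    | cons b w ih =>
      intro P hP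
      obtain ⟨j, hj⟩ := ih (mv P b) (hmvC P b hP)
      rw [List.foldl_cons]
      cases b
      · rcases hj with hj | hj
        · exact ⟨j + 1, Or.inr (by rw [hj, hU3 P]; ring)⟩
        · refine ⟨j + (n - 1), Or.inl ?_⟩
          rw [hj, hV3 P]
          have hμ2 : χ ^ (2 * (n - 1)) = μ ^ 2 := by
            have h1 : χ ^ (2 * (n - 1)) * χ ^ 2 = μ ^ 2 * χ ^ 2 := by
              rw [← pow_add, show 2 * (n - 1) + 2 = n * 2 by omega, pow_mul, hχn, one_pow,
                ← mul_pow, mul_comm μ χ, hμ, one_pow]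
            exact mul_right_cancel₀ (pow_ne_zero 2 hχ0) h1
          rw [← hμ2]
          ring
      · rcases hj with hj | hj
        · exact ⟨j, Or.inr (by rw [hj, hU2 P])⟩
        · exact ⟨j, Or.inl (by rw [hj, hV2 P]; ring)⟩
  have hrot : ∀ P, Cn P → ∀ j : ℕ, ∃ w, Uc (List.foldl mv P w) = χ ^ (2 * j) * Uc P := by
    intro P hP j
    induction j with
    | zero => exact ⟨[], by rw [List.foldl_nil]; norm_num⟩
    | succ j ih =>
      obtain ⟨w, hw⟩ := ih
      refine ⟨w ++ [true, false], ?_⟩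
      rw [List.foldl_append]
      rw [show List.foldl mv (List.foldl mv P w) [true, false]
          = mv (mv (List.foldl mv P w) true) false from rfl]
      rw [hU3 _, hV2 _, hw]
      ring
  have hevenreach : ∀ P Q (j : ℕ), Cn P → Cn Q → Uc Q = χ ^ (2 * j) * Uc P →
      ∃ w, List.foldl mv P w = Q := by
    intro P Q j hP hQ hUQ
    obtain ⟨w, hw⟩ := hrot P hP j
    have hRC : Cn (List.foldl mv P w) := hfoldC w P hP
    have hUR : Uc (List.foldl mv P w) = Uc Q := by rw [hw, hUQ]
    refine ⟨w, S12.coord_inj B C χ μ hδ0 _ _ hUR ?_⟩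
    have hcalc : Uc Q * Vc (List.foldl mv P w) = Uc Q * Vc Q := by
      calc Uc Q * Vc (List.foldl mv P w)
          = Uc (List.foldl mv P w) * Vc (List.foldl mv P w) := by rw [hUR]
        _ = -(S12.em p f) := hUV _ hRC
        _ = Uc Q * Vc Q := (hUV Q hQ).symm
    exact mul_left_cancel₀ (hU0 Q hQ) hcalc
  have KEY : (∀ P Q, Cn P → Cn Q → ∃ k, k < n ∧ Uc Q = χ ^ k * Uc P) ∧
      (∀ P t, Cn P → χ ^ t * Uc P = - Vc P → (Even t ↔ IsSquare f)) ∧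
      (∃ P Q, Cn P ∧ Cn Q ∧ Uc Q = χ * Uc P) := by
    rcases hmax with ⟨⟨c, hc⟩, hord⟩ | ⟨hpow, hord⟩
    · -- split case : χ = em c
      have hc' : S12.em p c = χ := hc
      have hc0 : c ≠ 0 := fun h => hχ0 (by rw [← hc', h, map_zero])
      have hcinv : S12.em p c⁻¹ = μ := by rw [map_inv₀, hc', hμdef]
      have hordc : orderOf c = p - 1 := by
        have h1 := orderOf_injective (S12.em p).toMonoidHom hιinj c
        have h2 : ((S12.em p).toMonoidHom : ZMod p →* GaloisField p 2) c = χ := hc'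
        rw [h2] at h1
        rw [← h1]
        exact hord
      have hprim : IsPrimitiveRoot c (p - 1) := by
        refine ⟨?_, ?_⟩
        · rw [← hordc]; exact pow_orderOf_eq_one c
        · intro l hl; rw [← hordc]; exact orderOf_dvd_of_pow_eq_one hl
      haveI : NeZero (p - 1) := ⟨by omega⟩
      haveI : Fact (2 < p) := ⟨by omega⟩
      have hrep : ∀ q : ZMod p × ZMod p,
          Uc q = S12.em p ((c - c⁻¹) * (q.1 - c * q.2) - (B * c + C)) := by
        intro q
        show S12.UU B C χ μ q = _
        rw [S12.UU]
        simp only [map_sub, map_mul, map_add, hc', hcinv]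
      have hrepV : ∀ q : ZMod p × ZMod p,
          Vc q = S12.em p ((c - c⁻¹) * (q.1 - c⁻¹ * q.2) + (B * c⁻¹ + C)) := by
        intro q
        show S12.VV B C χ μ q = _
        rw [S12.VV]
        simp only [map_sub, map_mul, map_add, hc', hcinv]
      have hu0 : ∀ q, Cn q → (c - c⁻¹) * (q.1 - c * q.2) - (B * c + C) ≠ 0 := by
        intro q hq h
        exact hU0 q hq (by rw [hrep q, h, map_zero])
      have hv0 : ∀ q, Cn q → (c - c⁻¹) * (q.1 - c⁻¹ * q.2) + (B * c⁻¹ + C) ≠ 0 := by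
        intro q hq h
        exact hV0 q hq (by rw [hrepV q, h, map_zero])
      refine ⟨?_, ?_, ?_⟩
      · -- H1
        intro P Q hP hQ
        set uP := (c - c⁻¹) * (P.1 - c * P.2) - (B * c + C) with huP
        set uQ := (c - c⁻¹) * (Q.1 - c * Q.2) - (B * c + C) with huQ
        have huP0 : uP ≠ 0 := hu0 P hP
        have huQ0 : uQ ≠ 0 := hu0 Q hQ
        have hw0 : uQ * uP⁻¹ ≠ 0 := mul_ne_zero huQ0 (inv_ne_zero huP0)
        have hw1 : (uQ * uP⁻¹) ^ (p - 1) = 1 := ZMod.pow_card_sub_one_eq_one hw0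
        obtain ⟨k, hk, hck⟩ := hprim.eq_pow_of_pow_eq_one hw1
        refine ⟨k, by omega, ?_⟩
        rw [hrep P, hrep Q, ← hc', ← map_pow, ← map_mul]
        apply congrArg
        rw [hck, mul_assoc, inv_mul_cancel₀ huP0, mul_one]
      · -- H2
        intro P t hP ht
        have hUPe := hrep P
        have hVPe := hrepV P
        set uP := (c - c⁻¹) * (P.1 - c * P.2) - (B * c + C) with huP
        set vP := (c - c⁻¹) * (P.1 - c⁻¹ * P.2) + (B * c⁻¹ + C) with hvP
        have huP0 : uP ≠ 0 := hu0 P hP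
        have hct : c ^ t * uP = -vP := by
          apply hιinj
          rw [map_mul, map_pow, hc', map_neg, ← hUPe, ← hVPe]
          exact ht
        have huv : uP * vP = -f := by
          apply hιinj
          rw [map_mul, map_neg, ← hUPe, ← hVPe]
          exact hUV P hP
        have hfeq : f = c ^ t * uP ^ 2 := by linear_combination huv - uP * hct
        have hpr : p / 2 = r := by omega
        have hc12 : c ^ (p / 2) = -1 := by
          have h2 : (c ^ (p / 2)) ^ 2 = 1 := by
            rw [← pow_mul, show p / 2 * 2 = p - 1 by omega, ← hordc]
            exact pow_orderOf_eq_one c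
          rw [pow_two] at h2
          rcases mul_self_eq_one_iff.mp h2 with h | h
          · exfalso
            have h4 := orderOf_dvd_of_pow_eq_one h
            rw [hordc] at h4
            have h5 := Nat.le_of_dvd (by omega) h4
            omega
          · exact h
        have hft : f ^ (p / 2) = (-1) ^ t := by
          rw [hfeq, mul_pow, ← pow_mul, mul_comm t (p / 2), pow_mul, hc12, ← pow_mul,
            show 2 * (p / 2) = p - 1 by omega, ZMod.pow_card_sub_one_eq_one huP0, mul_one]
        rw [ZMod.euler_criterion p hf0, hft]
        exact (neg_one_pow_eq_one_iff_even (ZMod.neg_one_ne_one)).symm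
      · -- H3
        have hd0 : c - c⁻¹ ≠ 0 := fun h => hδ0 (by rw [← hc', ← hcinv, ← map_sub, h, map_zero])
        have hww : (c - c⁻¹) * (c - c⁻¹)⁻¹ = 1 := mul_inv_cancel₀ hd0
        have hsolve : ∀ u v : ZMod p, ∃ P : ZMod p × ZMod p,
            Uc P = S12.em p u ∧ Vc P = S12.em p v := by
          intro u v
          refine ⟨((u + B * c + C) * (c - c⁻¹)⁻¹
              + c * (-(u - v + B * c + B * c⁻¹ + 2 * C) * ((c - c⁻¹)⁻¹) ^ 2),
              -(u - v + B * c + B * c⁻¹ + 2 * C) * ((c - c⁻¹)⁻¹) ^ 2), ?_, ?_⟩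
          · rw [hrep]
            apply congrArg
            linear_combination (u + B * c + C) * hww
          · rw [hrepV]
            apply congrArg
            linear_combination ((u + B * c + C) - (u - v + B * c + B * c⁻¹ + 2 * C)
              * ((c - c⁻¹) * (c - c⁻¹)⁻¹ + 1)) * hww
        obtain ⟨P, hPu, hPv⟩ := hsolve 1 (-f)
        obtain ⟨Q, hQu, hQv⟩ := hsolve c (-f * c⁻¹)
        have hPC : Cn P := (hconic P).mpr (by rw [hPu, hPv, ← map_mul, one_mul, map_neg])
        have hQC : Cn Q := (hconic Q).mpr (by
          rw [hQu, hQv, ← map_mul, show c * (-f * c⁻¹) = -f by field_simp [mul_comm], map_neg])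
        exact ⟨P, Q, hPC, hQC, by rw [hQu, hPu, map_one, mul_one, hc']⟩
    · -- nonsplit case
      haveI : Fintype (GaloisField p 2) := Fintype.ofFinite _
      have hcard : Fintype.card (GaloisField p 2) = p ^ 2 := by
        rw [← Nat.card_eq_fintype_card, GaloisField.card p 2 (by norm_num)]
      have hχp : χ ^ p = μ := by
        have h1 : χ ^ p * χ = μ * χ := by
          rw [← pow_succ, hpow, mul_comm]
          exact hμ.symm
        exact mul_right_cancel₀ hχ0 h1
      have hμpow : μ ^ (p + 1) = 1 := by
        have h2 : (χ * μ) ^ (p + 1) = 1 := by rw [hμ, one_pow]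
        rw [mul_pow, hpow, one_mul] at h2
        exact h2
      have hμp : μ ^ p = χ := by
        have h1 : μ ^ p * μ = χ * μ := by
          rw [← pow_succ, hμpow]
          exact hμ.symm
        exact mul_right_cancel₀ hμ0 h1
      have hfrob : ∀ q, (Uc q) ^ p = - Vc q := fun q => S12.frob_pow B C χ μ hχp hμp q
      have hUp1 : ∀ q, Cn q → (Uc q) ^ (p + 1) = S12.em p f := by
        intro q hq
        rw [pow_succ, hfrob q]
        have h := hUV q hq
        linear_combination -h
      haveI : NeZero (p + 1) := ⟨by omega⟩
      have hprim : IsPrimitiveRoot χ (p + 1) :=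
        ⟨hpow, fun l hl => hord ▸ orderOf_dvd_of_pow_eq_one hl⟩
      refine ⟨?_, ?_, ?_⟩
      · -- H1
        intro P Q hP hQ
        have hUP0 := hU0 P hP
        have hw1 : (Uc Q * (Uc P)⁻¹) ^ (p + 1) = 1 := by
          rw [mul_pow, inv_pow, hUp1 P hP, hUp1 Q hQ, mul_inv_cancel₀ hιf0]
        obtain ⟨k, hk, hck⟩ := hprim.eq_pow_of_pow_eq_one hw1
        refine ⟨k, by omega, ?_⟩
        rw [hck, mul_assoc, inv_mul_cancel₀ hUP0, mul_one]
      · -- H2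
        intro P t hP ht
        have hUP0 := hU0 P hP
        have hct : χ ^ t = (Uc P) ^ (p - 1) := by
          have h1 : χ ^ t * Uc P = (Uc P) ^ (p - 1) * Uc P := by
            rw [ht, ← hfrob P, ← pow_succ, show p - 1 + 1 = p by omega]
          exact mul_right_cancel₀ hUP0 h1
        have key : χ ^ (t * (r + 1)) = S12.em p (f ^ r) := by
          rw [map_pow, ← hUp1 P hP, pow_mul, hct, ← pow_mul, ← pow_mul]
          congr 1
          have h1 : p - 1 = 2 * r := by omega
          have h2 : p + 1 = 2 * (r + 1) := by omega
          rw [h1, h2]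
          ring
        rw [ZMod.euler_criterion p hf0, show p / 2 = r by omega]
        constructor
        · intro hte
          obtain ⟨s, hs⟩ := hte
          have h1 : χ ^ (t * (r + 1)) = 1 := by
            rw [show t * (r + 1) = (p + 1) * s by
              rw [hs, show p + 1 = 2 * (r + 1) by omega]; ring]
            rw [pow_mul, hpow, one_pow]
          rw [key] at h1
          apply hιinj
          rw [map_pow, map_one]
          rw [map_pow] at h1
          exact h1
        · intro hfr
          have h1 : χ ^ (t * (r + 1)) = 1 := by rw [key, hfr, map_one]
          have h2 : (p + 1) ∣ t * (r + 1) := hord ▸ orderOf_dvd_of_pow_eq_one h1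
          have h3 : 2 * (r + 1) ∣ t * (r + 1) := by
            rwa [show p + 1 = 2 * (r + 1) by omega] at h2
          have h4 : 2 ∣ t := (Nat.mul_dvd_mul_iff_right (show 0 < r + 1 by omega)).mp h3
          obtain ⟨s, hs⟩ := h4
          exact ⟨s, by omega⟩
      · -- H3
        obtain ⟨g, hg⟩ := IsCyclic.exists_generator (α := (GaloisField p 2)ˣ)
        have hordg : orderOf g = p ^ 2 - 1 := by
          rw [orderOf_eq_card_of_forall_mem_zpowers hg, Nat.card_eq_fintype_card,
            Fintype.card_units, hcard]
        have huf : S12.em p f ≠ 0 := hιf0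
        obtain ⟨k, hk⟩ := Submonoid.mem_powers_iff _ _ |>.mp
          (mem_powers_iff_mem_zpowers.mpr (hg (Units.mk0 (S12.em p f) huf)))
        have hufp : (Units.mk0 (S12.em p f) huf) ^ (p - 1) = 1 := by
          have h1 : (S12.em p f) ^ (p - 1) = 1 := by
            rw [← map_pow, ZMod.pow_card_sub_one_eq_one hf0, map_one]
          exact Units.ext (by rw [Units.val_pow_eq_pow_val, Units.val_one]; exact h1)
        have hdvd : (p ^ 2 - 1) ∣ k * (p - 1) := by
          rw [← hordg]
          apply orderOf_dvd_of_pow_eq_one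
          rw [pow_mul, hk, hufp]
        have hfac : p ^ 2 - 1 = (p + 1) * (p - 1) := by
          obtain ⟨m, hm⟩ : ∃ m, p = m + 1 := ⟨p - 1, by omega⟩
          have h1 : (m + 1) ^ 2 = (m + 1 + 1) * m + 1 := by ring
          rw [hm]
          simp only [Nat.add_sub_cancel]
          omega
        have hdvd2 : (p + 1) ∣ k := by
          rw [hfac] at hdvd
          exact (Nat.mul_dvd_mul_iff_right (show 0 < p - 1 by omega)).mp hdvd
        obtain ⟨m, hm⟩ := hdvd2
        have hUnorm : ((g ^ m : (GaloisField p 2)ˣ) : GaloisField p 2) ^ (p + 1)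
            = S12.em p f := by
          rw [← Units.val_pow_eq_pow_val, ← pow_mul, show m * (p + 1) = k by rw [hm]; ring, hk]
          rfl
        have hpodd' : Odd p := ⟨r, by omega⟩
        have hsolveNS : ∀ U : GaloisField p 2, U ^ (p + 1) = S12.em p f →
            ∃ P : ZMod p × ZMod p, Cn P ∧ Uc P = U := by
          intro U hU
          have hUb : U ^ (p ^ 2) = U := by
            have h := FiniteField.pow_card U
            rwa [hcard] at h
          set b2 : GaloisField p 2 := S12.em p B * χ + S12.em p C with hb2
          set a2 : GaloisField p 2 := S12.em p B * μ + S12.em p C with ha2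
          have hw1 : (χ - μ) * (χ - μ)⁻¹ = 1 := mul_inv_cancel₀ hδ0
          have hW : (χ - μ) ^ 2 * ((χ - μ) ^ 2)⁻¹ = 1 := mul_inv_cancel₀ (pow_ne_zero 2 hδ0)
          set zF : GaloisField p 2 := -(U + b2 + U ^ p + a2) * ((χ - μ) ^ 2)⁻¹ with hzF
          set yF : GaloisField p 2 := (U + b2) * (χ - μ)⁻¹ + χ * zF with hyF
          have eq1 : (χ - μ) * (yF - χ * zF) - b2 = U := by
            rw [hyF]
            linear_combination (U + b2) * hw1
          have eq2 : (χ - μ) * (yF - μ * zF) + a2 = -U ^ p := by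
            rw [hyF, hzF]
            linear_combination (U + b2) * hw1 - (U + b2 + U ^ p + a2) * hW
          have hb2p : b2 ^ p = a2 := by
            rw [hb2, ha2, add_pow_char, mul_pow, ← map_pow, ← map_pow, ZMod.pow_card,
              ZMod.pow_card, hχp]
          have ha2p : a2 ^ p = b2 := by
            rw [hb2, ha2, add_pow_char, mul_pow, ← map_pow, ← map_pow, ZMod.pow_card,
              ZMod.pow_card, hμp]
          have hδ2p : ((χ - μ) ^ 2) ^ p = (χ - μ) ^ 2 := by
            rw [← pow_mul, mul_comm 2 p, pow_mul, sub_pow_char, hχp, hμp]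
            ring
          have hzFp : zF ^ p = zF := by
            rw [hzF, mul_pow, inv_pow, hδ2p, hpodd'.neg_pow, add_pow_char, add_pow_char,
              add_pow_char, hb2p, ha2p, ← pow_mul, show p * p = p ^ 2 by ring, hUb]
            ring_nf
          obtain ⟨z0, hz00⟩ := aux_mem_range zF hzFp
          have hz0 : S12.em p z0 = zF := hz00
          have hμχ0 : μ - χ ≠ 0 := fun h => hδ0 (by linear_combination -h)
          have hw2 : (μ - χ) * (μ - χ)⁻¹ = 1 := mul_inv_cancel₀ hμχ0
          have hyFp : yF ^ p = yF := by
            have hsp : (χ - μ) ^ p = μ - χ := by rw [sub_pow_char, hχp, hμp]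
            have h1 : yF ^ p = (U ^ p + a2) * (μ - χ)⁻¹ + μ * zF := by
              rw [hyF, add_pow_char, mul_pow, mul_pow, inv_pow, hsp, add_pow_char, hb2p,
                hχp, hzFp]
            rw [h1]
            have h2 : U ^ p + a2 = (μ - χ) * (yF - μ * zF) := by linear_combination eq2
            rw [h2]
            linear_combination (yF - μ * zF) * hw2
          obtain ⟨y0, hy00⟩ := aux_mem_range yF hyFp
          have hy0 : S12.em p y0 = yF := hy00
          have hUc' : Uc (y0, z0) = U := by
            show S12.UU B C χ μ (y0, z0) = U
            rw [S12.UU]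
            show (χ - μ) * (S12.em p y0 - χ * S12.em p z0) - b2 = U
            rw [hy0, hz0]
            exact eq1
          have hVc' : Vc (y0, z0) = -U ^ p := by
            show S12.VV B C χ μ (y0, z0) = -U ^ p
            rw [S12.VV]
            show (χ - μ) * (S12.em p y0 - μ * S12.em p z0) + a2 = -U ^ p
            rw [hy0, hz0]
            exact eq2
          refine ⟨(y0, z0), ?_, hUc'⟩
          apply (hconic _).mpr
          rw [hUc', hVc', show U * -U ^ p = -(U ^ p * U) by ring, ← pow_succ, hU]
        obtain ⟨P, hPC, hPU⟩ := hsolveNS _ hUnorm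
        have hQnorm : (χ * ((g ^ m : (GaloisField p 2)ˣ) : GaloisField p 2)) ^ (p + 1)
            = S12.em p f := by
          rw [mul_pow, hpow, one_mul, hUnorm]
        obtain ⟨Q, hQC, hQU⟩ := hsolveNS _ hQnorm
        exact ⟨P, Q, hPC, hQC, by rw [hQU, hPU]⟩
  obtain ⟨H1, H2, H3⟩ := KEY
  constructor
  · intro htrans hsqf
    obtain ⟨P, Q, hP, hQ, hUQ⟩ := H3
    have hPt : Cn (mv P true) := hmvC P true hP
    obtain ⟨t, htlt, hUt⟩ := H1 P (mv P true) hP hPt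
    have ht' : χ ^ t * Uc P = - Vc P := by rw [← hUt]; exact hU2 P
    have hteven : Even t := (H2 P t hP ht').mpr hsqf
    obtain ⟨w, hw⟩ := htrans P hP Q hQ
    obtain ⟨j, hj⟩ := hreach w P hP
    rw [hw] at hj
    have hUP0 := hU0 P hP
    rcases hj with h | h
    · have h1 : χ ^ (2 * j) = χ ^ 1 := by
        apply mul_right_cancel₀ hUP0
        rw [← h, hUQ, pow_one]
      have h2 := (parity (2 * j) 1 h1).mp ⟨j, by ring⟩
      exact absurd h2 (by decide)
    · have h1 : χ ^ (2 * j + t) = χ ^ 1 := by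
        apply mul_right_cancel₀ hUP0
        rw [pow_add, pow_one, mul_assoc, ht', ← h, hUQ]
      have h2 := (parity (2 * j + t) 1 h1).mp
        (by obtain ⟨s, hs⟩ := hteven; exact ⟨j + s, by omega⟩)
      exact absurd h2 (by decide)
  · intro hnsq P hP Q hQ
    have hP' : Cn P := hP
    have hQ' : Cn Q := hQ
    obtain ⟨k, hk, hUk⟩ := H1 P Q hP' hQ'
    rcases Nat.even_or_odd k with he | ho
    · obtain ⟨j, hj⟩ := he
      exact hevenreach P Q j hP' hQ' (by rw [hUk, show k = 2 * j by omega])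
    · have hPt : Cn (mv P true) := hmvC P true hP'
      obtain ⟨t, htlt, hUt⟩ := H1 P (mv P true) hP' hPt
      have ht' : χ ^ t * Uc P = - Vc P := by rw [← hUt]; exact hU2 P
      have htodd : ¬ Even t := fun hte => hnsq ((H2 P t hP' ht').mp hte)
      have htodd' : Odd t := Nat.not_even_iff_odd.mp htodd
      obtain ⟨a, ha⟩ := ho
      obtain ⟨b, hb⟩ := hneven
      obtain ⟨e, heq⟩ := htodd'
      have hkn : k + n - t = 2 * (a + b - e) := by omega
      have hUQ' : Uc Q = χ ^ (2 * (a + b - e)) * Uc (mv P true) := by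
        rw [hUt, ← mul_assoc, ← pow_add, ← hkn,
          show k + n - t + t = k + n by omega, pow_add, hχn, mul_one]
        exact hUk
      obtain ⟨w, hw⟩ := hevenreach (mv P true) Q (a + b - e) hPt hQ' hUQ'
      exact ⟨true :: w, by rw [List.foldl_cons]; exact hw⟩
end

section
/- Let a₁, a₂, a₃ be elements of a field and set A = -2a₁ - a₂a₃, B = -2a₂ - a₁a₃, C = -2a₃ - a₁a₂, D = -2a₁a₂a₃ - a₁² - a₂² - a₃². If A = B, then (a₁ - a₂)(a₃ - 2) = 0 (i.e., a₃ = 2 or a₁ = a₂). Moreover, 4D + A² - 8C - 16 = (a₁² - 4)(a₃ - 2)² when a₁ = a₂, and 4D + A² - 8C - 16 = 0 when a₃ = 2. Consequently, the quadruple (A,B,C,D) satisfies A = B and 4D + A² = 8C + 16 if and only if a₃ = 2, or (a₁ = a₂ and a₁² = 4). -/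
/-- For parameters `A = -2a₁ - a₂a₃`, `B = -2a₂ - a₁a₃`, `C = -2a₃ - a₁a₂`,
`D = -2a₁a₂a₃ - a₁² - a₂² - a₃²` arising from the generalized cluster algebra
equation: if `A = B` then `(a₁ - a₂)(a₃ - 2) = 0`; moreover
`4D + A² - 8C - 16 = (a₁² - 4)(a₃ - 2)²` when `a₁ = a₂`, and
`4D + A² - 8C - 16 = 0` when `a₃ = 2`; consequently `A = B ∧ 4D + A² = 8C + 16`
holds iff `a₃ = 2` or (`a₁ = a₂` and `a₁² = 4`). -/
theorem stmt_15 {F : Type*} [Field F] (a₁ a₂ a₃ A B C D : F)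
    (hA : A = -2 * a₁ - a₂ * a₃) (hB : B = -2 * a₂ - a₁ * a₃)
    (hC : C = -2 * a₃ - a₁ * a₂)
    (hD : D = -2 * a₁ * a₂ * a₃ - a₁ ^ 2 - a₂ ^ 2 - a₃ ^ 2) :
    (A = B → (a₁ - a₂) * (a₃ - 2) = 0) ∧
    (a₁ = a₂ → 4 * D + A ^ 2 - 8 * C - 16 = (a₁ ^ 2 - 4) * (a₃ - 2) ^ 2) ∧
    (a₃ = 2 → 4 * D + A ^ 2 - 8 * C - 16 = 0) ∧
    ((A = B ∧ 4 * D + A ^ 2 = 8 * C + 16) ↔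
      (a₃ = 2 ∨ (a₁ = a₂ ∧ a₁ ^ 2 = 4))) := by
  subst hA hB hC hD
  refine ⟨fun h => by linear_combination h, fun h => by subst h; ring,
    fun h => by subst h; ring, ?_⟩
  constructor
  · rintro ⟨h1, h2⟩
    have h3 : (a₁ - a₂) * (a₃ - 2) = 0 := by linear_combination h1
    rcases mul_eq_zero.1 h3 with h | h
    · have h12 : a₁ = a₂ := sub_eq_zero.1 h
      by_cases h32 : a₃ = 2
      · exact Or.inl h32
      · refine Or.inr ⟨h12, ?_⟩
        have h4 : (a₁ ^ 2 - 4) * (a₃ - 2) ^ 2 = 0 := by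
          subst h12; linear_combination h2
        rcases mul_eq_zero.1 h4 with h5 | h5
        · linear_combination h5
        · exact absurd (sub_eq_zero.1 (pow_eq_zero_iff two_ne_zero |>.1 h5)) h32
    · exact Or.inl (sub_eq_zero.1 h)
  · rintro (h | ⟨h1, h2⟩)
    · subst h; constructor <;> ring
    · subst h1; constructor
      · ring
      · linear_combination (a₃ - 2) ^ 2 * h2
end

section
/- Let F be a field of characteristic ≠ 2 and let A, C ∈ F. Suppose (x, y, z) and (x, y, z') both satisfy the equation X² + Y² + Z² = XYZ + AX + AY + CZ + (-A²/4 + 2C + 4), where z and z' are the two roots of the quadratic in Z. Then (z + 2)(z' + 2) = (x + y - A/2)². In particular, the product of the Legendre symbols of (z+2) and (z'+2) is nonnegative when F = 𝔽_p. -/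
/-- On the degenerate surface `X² + Y² + Z² = XYZ + AX + AY + CZ + D` with
`D = -A²/4 + 2C + 4`: if `(x,y,z)` lies on the surface and `z' = C + xy - z`
is the other root of the quadratic in the third coordinate (so `(x,y,z')` is
also on the surface), then `(z + 2)(z' + 2) = (x + y - A/2)²`. -/
theorem stmt_16 {F : Type*} [Field F] (h2 : (2 : F) ≠ 0) (A C x y z z' : F)
    (hsurf : x ^ 2 + y ^ 2 + z ^ 2
      = x * y * z + A * x + A * y + C * z + (-(A ^ 2) / 4 + 2 * C + 4))
    (hsurf' : x ^ 2 + y ^ 2 + z' ^ 2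
      = x * y * z' + A * x + A * y + C * z' + (-(A ^ 2) / 4 + 2 * C + 4))
    (hroots : z + z' = C + x * y) :
    (z + 2) * (z' + 2) = (x + y - A / 2) ^ 2 := by
  have h4 : (4 : F) ≠ 0 := by
    have := mul_ne_zero h2 h2; norm_num at this ⊢; exact this
  field_simp at hsurf ⊢
  linear_combination (4 * z + 8) * hroots - hsurf
end

section
/- Let F be a field of characteristic ≠ 2, A, C ∈ F, D = -A²/4 + 2C + 4, and let (x, y, z) satisfy x² + y² + z² = xyz + Ax + Ay + Cz + D. Then (z + 2)(xy + C + 2x + 2y - A + 4) = (x + y + z - A/2 + 2)². -/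
/-- On the degenerate surface `x² + y² + z² = xyz + Ax + Ay + Cz + D` with
`D = -A²/4 + 2C + 4`, every point satisfies
`(z + 2)(xy + C + 2x + 2y - A + 4) = (x + y + z - A/2 + 2)²`. -/
theorem stmt_17 {F : Type*} [Field F] (h2 : (2 : F) ≠ 0) (A C D x y z : F)
    (hD : D = -(A ^ 2) / 4 + 2 * C + 4)
    (hsurf : x ^ 2 + y ^ 2 + z ^ 2
      = x * y * z + A * x + A * y + C * z + D) :
    (z + 2) * (x * y + C + 2 * x + 2 * y - A + 4)
      = (x + y + z - A / 2 + 2) ^ 2 := by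
  subst hD
  have h4 : (4 : F) ≠ 0 := by
    have := mul_ne_zero h2 h2
    norm_num at this; exact_mod_cast this
  field_simp at hsurf ⊢
  linear_combination -hsurf
end

section
/- Let F be a field of characteristic ≠ 2, A ∈ F, and D = -A²/4 + 2A + 4 (i.e., the case B = C = A with 4D + A² = 8A + 16). For any (x, y, z) satisfying x² + y² + z² = xyz + A(x + y + z) + D, we have (x + 2)(y + 2)(z + 2) = (x + y + z + 2 - A/2)². In particular, over 𝔽_p either zero or exactly two of x+2, y+2, z+2 are quadratic nonresidues. -/
/-- On the fully symmetric degenerate surface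
`x² + y² + z² = xyz + A(x + y + z) + D` with `D = -A²/4 + 2A + 4`,
every point satisfies `(x + 2)(y + 2)(z + 2) = (x + y + z + 2 - A/2)²`. -/
theorem stmt_19 {F : Type*} [Field F] (h2 : (2 : F) ≠ 0) (A D x y z : F)
    (hD : D = -(A ^ 2) / 4 + 2 * A + 4)
    (hsurf : x ^ 2 + y ^ 2 + z ^ 2
      = x * y * z + A * (x + y + z) + D) :
    (x + 2) * (y + 2) * (z + 2) = (x + y + z + 2 - A / 2) ^ 2 := by
  subst hD
  have h4 : (4 : F) ≠ 0 := by
    have := mul_ne_zero h2 h2; norm_num at this; simpa using this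
  field_simp at hsurf ⊢
  linear_combination -hsurf
end
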